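/- arXiv:math/0609501 — 2 statements merged into one kernel-verified Lean document; each statement's English description precedes it below -/
import Mathlib

section
/- Let V be a vector space with bilinear multiplication μ and linear map α, and define the α-associator a(x,y,z) = μ(μ(x,y),α(z)) − μ(α(x),μ(y,z)). Let G be a subgroup of the symmetric group S₃ and suppose (V,μ,α) is G-Hom-associative, i.e. Σ_{σ∈G} sgn(σ) a(x_{σ(1)}, x_{σ(2)}, x_{σ(3)}) = 0 for all x₁,x₂,x₃. Then Σ_{σ∈S₃} sgn(σ) a(x_{σ(1)}, x_{σ(2)}, x_{σ(3)}) = 0 for all x₁,x₂,x₃; consequently (V,μ,α) is Hom-Lie admissible. -/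
/-!
Split `S₃` into left cosets `hG`. Since `sign (h * g) = sign h * sign g`, the signed sum over the
coset `hG` is `sign h` times the signed sum over `G` evaluated at the permuted arguments `x ∘ h`,
which vanishes by `G`-Hom-associativity. Expanding the Hom-Jacobiator of the commutator bracket
gives exactly minus the alternating `S₃`-sum of the `α`-associator.
-/

open Equiv Equiv.Perm

open QuotientGroup in
theorem Subgroup.sum_eq_sum_quotient_sum {H M : Type*} [Group H] [Fintype H] [AddCommMonoid M]
    (G : Subgroup H) [Fintype G] [Fintype (H ⧸ G)] (f : H → M) :
    ∑ σ, f σ = ∑ q : H ⧸ G, ∑ g : G, f (q.out * g) := by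
  classical
  rw [← Fintype.sum_fiberwise (QuotientGroup.mk : H → H ⧸ G) f]
  refine Fintype.sum_congr _ _ fun q => ?_
  let e : {σ : H // (σ : H ⧸ G) = q} ≃ G :=
    { toFun σ := ⟨q.out⁻¹ * σ, QuotientGroup.eq.mp (by rw [out_eq', σ.2])⟩
      invFun g := ⟨q.out * g, by rw [mk_mul_of_mem _ g.2, out_eq']⟩
      left_inv σ := by simp
      right_inv g := by simp }
  exact Fintype.sum_equiv e _ _ fun σ => by simp [e]

theorem Subgroup.sum_eq_zero_of_forall_sum_mul_eq_zero {H M : Type*} [Group H] [Fintype H]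
    [AddCommMonoid M] (G : Subgroup H) [Fintype G] {f : H → M}
    (hf : ∀ h, ∑ g : G, f (h * g) = 0) : ∑ σ, f σ = 0 := by
  have : Fintype (H ⧸ G) := Fintype.ofFinite _
  rw [G.sum_eq_sum_quotient_sum f]
  exact Finset.sum_eq_zero fun q _ => hf q.out

theorem sum_sign_smul_eq_zero_of_subgroup {ι K V : Type*} [DecidableEq ι] [Fintype ι] [Ring K]
    [AddCommGroup V] [Module K V] (G : Subgroup (Perm ι)) [Fintype G] (Φ : (ι → V) → V)
    (hG : ∀ x : ι → V, ∑ σ : G, ((sign (σ : Perm ι) : ℤ) : K) • Φ (x ∘ σ) = 0) (x : ι → V) :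
    ∑ σ : Perm ι, ((sign σ : ℤ) : K) • Φ (x ∘ σ) = 0 := by
  refine G.sum_eq_zero_of_forall_sum_mul_eq_zero fun h => ?_
  calc ∑ g : G, ((sign (h * g : Perm ι) : ℤ) : K) • Φ (x ∘ ⇑(h * g : Perm ι))
      = ((sign h : ℤ) : K) • ∑ g : G, ((sign (g : Perm ι) : ℤ) : K) • Φ ((x ∘ h) ∘ g) := by
        simp only [Finset.smul_sum, smul_smul, map_mul, Units.val_mul, Int.cast_mul]
        rfl
    _ = 0 := by rw [hG, smul_zero]

theorem Fin.sum_univ_perm_three {M : Type*} [AddCommMonoid M] (f : Perm (Fin 3) → M) :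
    ∑ σ, f σ = f 1 + f (swap 0 1) + f (swap 0 2) + f (swap 1 2) + f (swap 0 1 * swap 1 2) +
      f (swap 1 2 * swap 0 1) := by
  have huniv : (Finset.univ : Finset (Perm (Fin 3))) =
      {1, swap 0 1, swap 0 2, swap 1 2, swap 0 1 * swap 1 2, swap 1 2 * swap 0 1} := by
    decide
  rw [huniv, Finset.sum_insert (by decide), Finset.sum_insert (by decide),
    Finset.sum_insert (by decide), Finset.sum_insert (by decide), Finset.sum_insert (by decide),
    Finset.sum_singleton]
  abel

section HomAlgebra

variable {K V : Type*} [CommRing K] [AddCommGroup V] [Module K V]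
  (μ : V →ₗ[K] V →ₗ[K] V) (α : V →ₗ[K] V)

def homAssociator (x y z : V) : V :=
  μ (μ x y) (α z) - μ (α x) (μ y z)

theorem homJacobiator_commutator_eq_neg_sum_sign_smul_homAssociator (x y z : V) :
    (μ (α x) (μ y z - μ z y) - μ (μ y z - μ z y) (α x)) +
      (μ (α y) (μ z x - μ x z) - μ (μ z x - μ x z) (α y)) +
      (μ (α z) (μ x y - μ y x) - μ (μ x y - μ y x) (α z)) =
    -∑ σ : Perm (Fin 3), ((sign σ : ℤ) : K) •
      homAssociator μ α (![x, y, z] (σ 0)) (![x, y, z] (σ 1)) (![x, y, z] (σ 2)) := by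
  rw [Fin.sum_univ_perm_three]
  simp only [map_sub, LinearMap.sub_apply, Perm.sign_one, Units.val_one, Int.cast_one, homAssociator,
    Fin.isValue, coe_one, id_eq, Matrix.cons_val_zero, Matrix.cons_val_one, Matrix.cons_val,
    one_smul, sign_swap', zero_ne_one, ↓reduceIte, Units.val_neg, Int.cast_neg, swap_apply_left,
    swap_apply_right, ne_eq, Fin.reduceEq, not_false_eq_true, swap_apply_of_ne_of_ne, neg_smul,
    neg_sub, one_ne_zero, Perm.sign_mul, mul_neg, mul_one, neg_neg, coe_mul, Function.comp_apply]
  abel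

end HomAlgebra

theorem stmt_5_general {K V : Type*} [Field K] [AddCommGroup V] [Module K V]
    (μ : V →ₗ[K] V →ₗ[K] V) (α : V →ₗ[K] V)
    (a : V → V → V → V)
    (ha : ∀ x y z : V, a x y z = μ (μ x y) (α z) - μ (α x) (μ y z))
    (G : Subgroup (Equiv.Perm (Fin 3))) [Fintype G]
    (hG : ∀ x : Fin 3 → V,
      ∑ σ : G, ((Equiv.Perm.sign (σ : Equiv.Perm (Fin 3)) : ℤ) : K) •
        a (x ((σ : Equiv.Perm (Fin 3)) 0)) (x ((σ : Equiv.Perm (Fin 3)) 1))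
          (x ((σ : Equiv.Perm (Fin 3)) 2)) = 0) :
    (∀ x : Fin 3 → V,
      ∑ σ : Equiv.Perm (Fin 3), ((Equiv.Perm.sign σ : ℤ) : K) •
        a (x (σ 0)) (x (σ 1)) (x (σ 2)) = 0) ∧
    (∀ x y z : V,
      (μ (α x) (μ y z - μ z y) - μ (μ y z - μ z y) (α x)) +
      (μ (α y) (μ z x - μ x z) - μ (μ z x - μ x z) (α y)) +
      (μ (α z) (μ x y - μ y x) - μ (μ x y - μ y x) (α z)) = 0) := by
  have hS₃ : ∀ x : Fin 3 → V,
      ∑ σ : Perm (Fin 3), ((sign σ : ℤ) : K) • a (x (σ 0)) (x (σ 1)) (x (σ 2)) = 0 :=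
    sum_sign_smul_eq_zero_of_subgroup G (fun x => a (x 0) (x 1) (x 2)) hG
  have ha' : a = homAssociator μ α := funext₃ ha
  refine ⟨hS₃, fun x y z => ?_⟩
  rw [homJacobiator_commutator_eq_neg_sum_sign_smul_homAssociator, ← ha', hS₃, neg_zero]

theorem stmt_5 {K V : Type*} [Field K] [CharZero K] [AddCommGroup V] [Module K V]
    (μ : V →ₗ[K] V →ₗ[K] V) (α : V →ₗ[K] V)
    (a : V → V → V → V)
    (ha : ∀ x y z : V, a x y z = μ (μ x y) (α z) - μ (α x) (μ y z))
    (G : Subgroup (Equiv.Perm (Fin 3))) [Fintype G]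
    (hG : ∀ x : Fin 3 → V,
      ∑ σ : G, ((Equiv.Perm.sign (σ : Equiv.Perm (Fin 3)) : ℤ) : K) •
        a (x ((σ : Equiv.Perm (Fin 3)) 0)) (x ((σ : Equiv.Perm (Fin 3)) 1))
          (x ((σ : Equiv.Perm (Fin 3)) 2)) = 0) :
    (∀ x : Fin 3 → V,
      ∑ σ : Equiv.Perm (Fin 3), ((Equiv.Perm.sign σ : ℤ) : K) •
        a (x (σ 0)) (x (σ 1)) (x (σ 2)) = 0) ∧
    (∀ x y z : V,
      (μ (α x) (μ y z - μ z y) - μ (μ y z - μ z y) (α x)) +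
      (μ (α y) (μ z x - μ x z) - μ (μ z x - μ x z) (α y)) +
      (μ (α z) (μ x y - μ y x) - μ (μ x y - μ y x) (α z)) = 0) :=
  stmt_5_general μ α a ha G hG
end

section
/- Let V be a 3-dimensional vector space over a field K of characteristic 0 with basis (X₁, X₂, X₃) and the sl(2)-type bracket [X₁,X₂] = 2X₂, [X₁,X₃] = −2X₃, [X₂,X₃] = X₁ (extended bilinearly and skew-symmetrically). A linear map α : V → V makes (V, [·,·], α) a Hom-Lie algebra (i.e. satisfies the Hom-Jacobi identity) if and only if the matrix of α in this basis has the form rows (a, d, c), (2c, b, f), (2d, e, b) for some a, b, c, d, e, f ∈ K. -/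
/-!
In coordinates the bracket is `[u, v] = (u₂v₃ - u₃v₂, 2(u₁v₂ - u₂v₁), 2(u₃v₁ - u₁v₃))`. The
Hom-Jacobiator `J(x, y, z)` is trilinear and vanishes when two arguments agree, so it is
`det (x, y, z) • J(X₁, X₂, X₃)`. Hence the Hom-Jacobi identity holds iff `J(X₁, X₂, X₃) = 0`, and
`J(X₁, X₂, X₃) = 2 (α₂₂ - α₃₃, 2α₁₃ - α₂₁, α₃₁ - 2α₁₂)`.
-/

open Matrix

section CommRing

variable {K : Type*} [CommRing K]

lemma eq_smul_single_add_iff (v : Fin 3 → K) (a b c : K) :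
    v = a • Pi.single 0 1 + b • Pi.single 1 1 + c • Pi.single 2 1 ↔
      v 0 = a ∧ v 1 = b ∧ v 2 = c := by
  simp [funext_iff, Fin.forall_fin_succ, Pi.single_apply]

def sl2Bracket (u v : Fin 3 → K) : Fin 3 → K :=
  ![u 1 * v 2 - u 2 * v 1, 2 * (u 0 * v 1 - u 1 * v 0), 2 * (u 2 * v 0 - u 0 * v 2)]

def homJacobiator (A : Matrix (Fin 3) (Fin 3) K) (x y z : Fin 3 → K) : Fin 3 → K :=
  sl2Bracket (A *ᵥ x) (sl2Bracket y z) + sl2Bracket (A *ᵥ y) (sl2Bracket z x) +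
    sl2Bracket (A *ᵥ z) (sl2Bracket x y)

lemma homJacobiator_eq_det_smul (A : Matrix (Fin 3) (Fin 3) K) (x y z : Fin 3 → K) :
    homJacobiator A x y z = (of ![x, y, z]).det •
      ![2 * (A 1 1 - A 2 2), 2 * (2 * A 0 2 - A 1 0), 2 * (A 2 0 - 2 * A 0 1)] := by
  ext i
  fin_cases i <;>
    simp [homJacobiator, sl2Bracket, det_fin_three, mulVec, dotProduct, Fin.sum_univ_three] <;>
    ring

end CommRing

section Field

variable {K : Type*} [Field K] [CharZero K]

lemma forall_homJacobiator_eq_zero_iff (A : Matrix (Fin 3) (Fin 3) K) :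
    (∀ x y z, homJacobiator A x y z = 0) ↔
      A 1 0 = 2 * A 0 2 ∧ A 2 0 = 2 * A 0 1 ∧ A 1 1 = A 2 2 := by
  simp only [homJacobiator_eq_det_smul]
  constructor
  · intro h
    obtain ⟨h11, h10, h20⟩ : A 1 1 - A 2 2 = 0 ∧ 2 * A 0 2 - A 1 0 = 0 ∧ A 2 0 - 2 * A 0 1 = 0 := by
      simpa [det_fin_three, funext_iff, Fin.forall_fin_succ]
        using h (Pi.single 0 1) (Pi.single 1 1) (Pi.single 2 1)
    exact ⟨by linear_combination -h10, by linear_combination h20, sub_eq_zero.mp h11⟩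
  · rintro ⟨h10, h20, h11⟩ x y z
    simp [h10, h20, h11]

lemma bracket_eq_sl2Bracket (br : (Fin 3 → K) →ₗ[K] (Fin 3 → K) →ₗ[K] (Fin 3 → K))
    (hskew : ∀ x y, br x y = -br y x)
    (h01 : br (Pi.single 0 1) (Pi.single 1 1) = (2 : K) • Pi.single 1 1)
    (h02 : br (Pi.single 0 1) (Pi.single 2 1) = (-2 : K) • Pi.single 2 1)
    (h12 : br (Pi.single 1 1) (Pi.single 2 1) = Pi.single 0 1) (u v : Fin 3 → K) :
    br u v = sl2Bracket u v := by
  have halt (w : Fin 3 → K) : br w w = 0 := self_eq_neg.mp (hskew w w)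
  rw [(eq_smul_single_add_iff u _ _ _).2 ⟨rfl, rfl, rfl⟩,
    (eq_smul_single_add_iff v _ _ _).2 ⟨rfl, rfl, rfl⟩]
  simp only [map_add, map_smul, LinearMap.add_apply, LinearMap.smul_apply, halt, h01, h02, h12,
    hskew (Pi.single 1 1) (Pi.single 0 1), hskew (Pi.single 2 1) (Pi.single 0 1),
    hskew (Pi.single 2 1) (Pi.single 1 1), smul_zero]
  ext i
  fin_cases i <;> simp [sl2Bracket] <;> ring

end Field

theorem stmt_15 {K : Type*} [Field K] [CharZero K]
    (br : (Fin 3 → K) →ₗ[K] (Fin 3 → K) →ₗ[K] (Fin 3 → K))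
    (α : (Fin 3 → K) →ₗ[K] (Fin 3 → K))
    (X : Fin 3 → (Fin 3 → K)) (hX : ∀ i, X i = Pi.single i 1)
    (hskew : ∀ x y : Fin 3 → K, br x y = - br y x)
    (h12 : br (X 0) (X 1) = (2 : K) • X 1)
    (h13 : br (X 0) (X 2) = (-2 : K) • X 2)
    (h23 : br (X 1) (X 2) = X 0) :
    (∀ x y z : Fin 3 → K,
      br (α x) (br y z) + br (α y) (br z x) + br (α z) (br x y) = 0) ↔
    (∃ a b c d e f : K,
      α (X 0) = a • X 0 + (2 * c) • X 1 + (2 * d) • X 2 ∧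
      α (X 1) = d • X 0 + b • X 1 + e • X 2 ∧
      α (X 2) = c • X 0 + f • X 1 + b • X 2) := by
  obtain rfl : X = fun i => Pi.single i 1 := funext hX
  set A := LinearMap.toMatrix' α
  have hα (v : Fin 3 → K) : α v = A *ᵥ v := (LinearMap.toMatrix'_mulVec α v).symm
  simp only [bracket_eq_sl2Bracket br hskew h12 h13 h23, hα, ← homJacobiator.eq_1,
    forall_homJacobiator_eq_zero_iff, mulVec_single_one, eq_smul_single_add_iff, col_apply]
  constructor
  · rintro ⟨h10, h20, h11⟩
    exact ⟨_, _, _, _, _, _, ⟨rfl, h10, h20⟩, ⟨rfl, rfl, rfl⟩, ⟨rfl, rfl, h11.symm⟩⟩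
  · rintro ⟨a, b, c, d, e, f, ⟨-, h10, h20⟩, ⟨h01, h11, -⟩, ⟨h02, -, h22⟩⟩
    exact ⟨by rw [h10, h02], by rw [h20, h01], by rw [h11, h22]⟩
end
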